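/- For three non-collinear points p_1, p_2, p_3 in ℝ², the 3×6 matrix B(3) whose rows are (−r_12ᵀ, r_12ᵀ, 0), (−r_13ᵀ, 0, r_13ᵀ), (0, −r_23ᵀ, r_23ᵀ), where r_ij = (p_ij^y, −p_ij^x)ᵀ is the 90°-rotation of p_j − p_i, has rank 3. -/

import Mathlib

open Matrix

/-!
A vanishing combination `∑ cₑ Bₑ` of the rows, read off on the columns of vertex `p₁`, gives
`c₁₂ r₁₂ + c₁₃ r₁₃ = 0`. The vectors `r₁₂, r₁₃` are the rotations of the edge vectors `p₂ - p₁`,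
`p₃ - p₁`, which are linearly independent because the points are not collinear, so `c₁₂ = c₁₃ = 0`.
On the columns of `p₃` the combination then reduces to `c₂₃ r₂₃ = 0`, and `r₂₃ ≠ 0` as `p₂ ≠ p₃`.
(In the code the points are `p 0, p 1, p 2`.)
-/

/-- 90° rotation of the relative position vector: `r = (p_ij^y, -p_ij^x)`. -/
def rvec (p q : Fin 2 → ℝ) : Fin 2 → ℝ := ![q 1 - p 1, -(q 0 - p 0)]

/-- The reduced bearing rigidity matrix `B(3)` for three points in the plane. -/
def B3 (p : Fin 3 → (Fin 2 → ℝ)) : Matrix (Fin 3) (Fin 3 × Fin 2) ℝ :=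
  Matrix.of fun e jk =>
    (if jk.1 = (![1, 2, 2] : Fin 3 → Fin 3) e then 1
     else if jk.1 = (![0, 0, 1] : Fin 3 → Fin 3) e then -1 else 0) *
      rvec (p ((![0, 0, 1] : Fin 3 → Fin 3) e)) (p ((![1, 2, 2] : Fin 3 → Fin 3) e)) jk.2

theorem linearIndependent_vsub_of_not_collinear {k V P : Type*} [DivisionRing k]
    [AddCommGroup V] [Module k V] [AddTorsor V P] {p : Fin 3 → P}
    (h : ¬Collinear k (Set.range p)) : LinearIndependent k ![p 1 -ᵥ p 0, p 2 -ᵥ p 0] := by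
  have hind := (affineIndependent_iff_linearIndependent_vsub k p 0).mp
    (affineIndependent_iff_not_collinear.mpr h)
  rw [← linearIndependent_equiv (finSuccAboveEquiv (0 : Fin 3))] at hind
  have hfam : ![p 1 -ᵥ p 0, p 2 -ᵥ p 0] =
      (fun i : {x // x ≠ (0 : Fin 3)} => p i -ᵥ p 0) ∘ finSuccAboveEquiv 0 := by
    ext i
    fin_cases i <;> rfl
  rwa [hfam]

def rot90 (R : Type*) [Ring R] : (Fin 2 → R) ≃ₗ[R] (Fin 2 → R) where
  toFun v := ![v 1, -v 0]
  invFun v := ![-v 1, v 0]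
  map_add' v w := by ext i; fin_cases i <;> simp [add_comm]
  map_smul' c v := by ext i; fin_cases i <;> simp
  left_inv v := by ext i; fin_cases i <;> simp
  right_inv v := by ext i; fin_cases i <;> simp

theorem rvec_eq_rot90 (p q : Fin 2 → ℝ) : rvec p q = rot90 ℝ (q - p) := rfl

theorem rvec_ne_zero {p q : Fin 2 → ℝ} (h : p ≠ q) : rvec p q ≠ 0 := by
  rw [rvec_eq_rot90, LinearEquiv.map_ne_zero_iff]
  exact sub_ne_zero.mpr h.symm

theorem linearIndependent_rvec_pair {p a b : Fin 2 → ℝ}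
    (h : LinearIndependent ℝ ![a - p, b - p]) : LinearIndependent ℝ ![rvec p a, rvec p b] := by
  have hfam : ![rvec p a, rvec p b] = rot90 ℝ ∘ ![a - p, b - p] := by
    ext i : 1
    fin_cases i <;> rfl
  rw [hfam]
  exact h.map' _ (rot90 ℝ).ker

section B3

variable (p : Fin 3 → (Fin 2 → ℝ))

theorem vecMul_B3_vertex_zero (c : Fin 3 → ℝ) :
    (fun k => (c ᵥ* B3 p) (0, k)) = -(c 0 • rvec (p 0) (p 1) + c 1 • rvec (p 0) (p 2)) := by
  ext k
  simp [vecMul, dotProduct, Fin.sum_univ_three, B3, add_comm]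

theorem vecMul_B3_vertex_two (c : Fin 3 → ℝ) :
    (fun k => (c ᵥ* B3 p) (2, k)) = c 1 • rvec (p 0) (p 2) + c 2 • rvec (p 1) (p 2) := by
  ext k
  simp [vecMul, dotProduct, Fin.sum_univ_three, B3]

theorem linearIndependent_row_B3
    (hli : LinearIndependent ℝ ![rvec (p 0) (p 1), rvec (p 0) (p 2)])
    (hr : rvec (p 1) (p 2) ≠ 0) : LinearIndependent ℝ (B3 p).row := by
  rw [Fintype.linearIndependent_iff]
  intro c hc
  replace hc : c ᵥ* B3 p = 0 := by rwa [vecMul_eq_sum]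
  obtain ⟨hc0, hc1⟩ : c 0 = 0 ∧ c 1 = 0 := by
    refine LinearIndependent.pair_iff.mp hli _ _ (neg_eq_zero.mp ?_)
    rw [← vecMul_B3_vertex_zero, hc]
    rfl
  have hc2 : c 2 = 0 := by
    have h := (vecMul_B3_vertex_two p c).symm
    rw [hc1, zero_smul, zero_add, hc] at h
    exact (smul_eq_zero.mp h).resolve_right hr
  intro i
  fin_cases i <;> assumption

end B3

theorem B3_rank (p : Fin 3 → (Fin 2 → ℝ))
    (hcol : ¬ Collinear ℝ (Set.range p)) :
    (B3 p).rank = 3 := by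
  have hsub : LinearIndependent ℝ ![p 1 - p 0, p 2 - p 0] := by
    simpa only [vsub_eq_sub] using linearIndependent_vsub_of_not_collinear hcol
  have h12 : p 1 ≠ p 2 := (affineIndependent_iff_not_collinear.mpr hcol).injective.ne (by decide)
  have hrows := linearIndependent_row_B3 p (linearIndependent_rvec_pair hsub) (rvec_ne_zero h12)
  simpa using hrows.rank_matrix
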